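/- arXiv:1503.08717 — 3 statements merged into one kernel-verified Lean document; each statement's English description precedes it below -/
import Mathlib

section
/- Let q > 1, φ(s) := (cosh s)^{1−q} and V₁(s) := q(q−1)/cosh²(s). Then the integrals ∫_ℝ |φ'|² ds, ∫_ℝ V₁ φ² ds and ∫_ℝ φ² ds are finite and satisfy ∫_ℝ |φ'(s)|² ds − ∫_ℝ V₁(s) φ(s)² ds = −(q−1)² · ∫_ℝ φ(s)² ds; that is, the Rayleigh quotient of the Schrödinger operator −d²/ds² − V₁ at φ equals −(q−1)². -/
/-!
The function `φ = cosh^{1-q}` is an eigenfunction: `φ'' = (q-1)² φ - V₁ φ`. Multiplying by `φ` and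
integrating by parts (no boundary terms, as `φ φ'` is integrable) gives
`-∫ φ'² = (q-1)² ∫ φ² - ∫ V₁ φ²`. All integrals converge because
`φ² = cosh^{2-2q}` decays like `e^{-(2q-2)|s|}`, while `|φ'| ≤ (q-1) φ` and `0 ≤ V₁ ≤ q(q-1)`.
-/

open MeasureTheory Real

/-- `φ(s) = (cosh s)^{1-q}` -/
noncomputable def phi (q : ℝ) : ℝ → ℝ := fun s => Real.cosh s ^ (1 - q)

/-- `V₁(s) = q(q-1)/cosh²(s)` -/
noncomputable def V1 (q : ℝ) : ℝ → ℝ := fun s => q * (q - 1) / (Real.cosh s) ^ 2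

lemma integrable_exp_mul_abs {a : ℝ} (ha : a < 0) : Integrable fun x : ℝ => exp (a * |x|) := by
  rw [← integrableOn_univ, ← Set.Iic_union_Ioi (a := 0), integrableOn_union]
  constructor
  · refine (integrableOn_exp_mul_Iic (neg_pos.2 ha) 0).congr_fun (fun x hx => ?_) measurableSet_Iic
    dsimp only
    rw [abs_of_nonpos hx, mul_neg, neg_mul]
  · refine (integrableOn_exp_mul_Ioi ha 0).congr_fun (fun x hx => ?_) measurableSet_Ioi
    rw [abs_of_pos hx]

lemma abs_sinh_le_cosh (x : ℝ) : |sinh x| ≤ cosh x := by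
  rw [abs_sinh, ← cosh_abs]
  exact (sinh_lt_cosh _).le

lemma exp_abs_div_two_le_cosh (x : ℝ) : exp |x| / 2 ≤ cosh x := by
  rw [← cosh_abs, cosh_eq]
  linarith [exp_pos (-|x|)]

lemma continuous_cosh_rpow (a : ℝ) : Continuous fun x : ℝ => cosh x ^ a :=
  continuous_cosh.rpow_const fun x => Or.inl (cosh_pos x).ne'

lemma integrable_cosh_rpow {a : ℝ} (ha : a < 0) : Integrable fun x : ℝ => cosh x ^ a := by
  refine ((integrable_exp_mul_abs ha).const_mul (2 ^ (-a))).mono'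
    (continuous_cosh_rpow a).aestronglyMeasurable (ae_of_all _ fun x => ?_)
  rw [norm_of_nonneg (rpow_nonneg (cosh_pos x).le a)]
  calc cosh x ^ a ≤ (exp |x| / 2) ^ a :=
        rpow_le_rpow_of_nonpos (by positivity) (exp_abs_div_two_le_cosh x) ha.le
    _ = 2 ^ (-a) * exp (a * |x|) := by
        rw [div_rpow (exp_pos _).le zero_le_two, ← exp_mul, rpow_neg zero_le_two, mul_comm |x|,
          div_eq_inv_mul]

section phi

variable (q : ℝ)

lemma phi_nonneg (s : ℝ) : 0 ≤ phi q s := rpow_nonneg (cosh_pos s).le _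

lemma phi_sq (s : ℝ) : phi q s ^ 2 = cosh s ^ (2 - 2 * q) := by
  rw [phi, ← rpow_natCast, ← rpow_mul (cosh_pos s).le]
  ring_nf

lemma cosh_rpow_neg (s : ℝ) : cosh s ^ (-q) = phi q s / cosh s := by
  rw [phi, ← rpow_sub_one (cosh_pos s).ne']
  ring_nf

lemma hasDerivAt_phi (s : ℝ) : HasDerivAt (phi q) ((1 - q) * (sinh s * cosh s ^ (-q))) s :=
  ((hasDerivAt_cosh s).rpow_const (Or.inl (cosh_pos s).ne')).congr_deriv
    (by rw [sub_sub_cancel_left]; ring)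

lemma deriv_phi : deriv (phi q) = fun s => (1 - q) * (sinh s * cosh s ^ (-q)) :=
  funext fun s => (hasDerivAt_phi q s).deriv

lemma hasDerivAt_deriv_phi (s : ℝ) :
    HasDerivAt (deriv (phi q)) ((q - 1) ^ 2 * phi q s - V1 q s * phi q s) s := by
  have hc := cosh_pos s
  rw [deriv_phi]
  refine HasDerivAt.congr_deriv (((hasDerivAt_sinh s).fun_mul ((hasDerivAt_cosh s).rpow_const
    (Or.inl hc.ne'))).const_mul (1 - q)) ?_
  have h2 : cosh s ^ (-q - 1) = phi q s / cosh s ^ 2 := by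
    rw [phi, pow_two, div_mul_eq_div_div, ← rpow_sub_one hc.ne', ← rpow_sub_one hc.ne']; ring_nf
  rw [cosh_rpow_neg, h2, V1]
  field_simp
  linear_combination (q - 1) * q * phi q s * sinh_sq s

lemma continuous_deriv_phi : Continuous (deriv (phi q)) :=
  continuous_iff_continuousAt.2 fun s => (hasDerivAt_deriv_phi q s).continuousAt

lemma continuous_V1 : Continuous (V1 q) :=
  continuous_const.div (continuous_cosh.pow 2) fun s => by positivity

variable {q}

lemma abs_deriv_phi_le (hq : 1 ≤ q) (s : ℝ) : |deriv (phi q) s| ≤ (q - 1) * phi q s := by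
  have hc := cosh_pos s
  have hsinh : |sinh s| * (phi q s / cosh s) ≤ phi q s :=
    calc _ ≤ cosh s * (phi q s / cosh s) := by
          gcongr
          · exact div_nonneg (phi_nonneg q s) hc.le
          · exact abs_sinh_le_cosh s
      _ = phi q s := mul_div_cancel₀ _ hc.ne'
  rw [(hasDerivAt_phi q s).deriv, cosh_rpow_neg, abs_mul, abs_mul,
    abs_of_nonpos (by linarith : 1 - q ≤ 0), abs_of_nonneg (div_nonneg (phi_nonneg q s) hc.le),
    neg_sub]
  exact mul_le_mul_of_nonneg_left hsinh (by linarith)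

lemma abs_V1_le (hq : 1 ≤ q) (s : ℝ) : |V1 q s| ≤ q * (q - 1) := by
  have hq' : 0 ≤ q * (q - 1) := mul_nonneg (by linarith) (by linarith)
  rw [V1, abs_of_nonneg (by positivity)]
  exact div_le_self hq' (one_le_pow₀ (one_le_cosh s))

lemma integrable_phi_sq (hq : 1 < q) : Integrable fun s => phi q s ^ 2 := by
  simp_rw [phi_sq]
  exact integrable_cosh_rpow (by linarith)

lemma integrable_deriv_phi_sq (hq : 1 < q) : Integrable fun s => deriv (phi q) s ^ 2 := by
  refine ((integrable_phi_sq hq).const_mul ((q - 1) ^ 2)).mono'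
    ((continuous_deriv_phi q).pow 2).aestronglyMeasurable (ae_of_all _ fun s => ?_)
  rw [norm_pow, norm_eq_abs, ← mul_pow]
  exact pow_le_pow_left₀ (abs_nonneg _) (abs_deriv_phi_le hq.le s) 2

lemma integrable_phi_mul_deriv_phi (hq : 1 < q) : Integrable (phi q * deriv (phi q)) := by
  refine ((integrable_phi_sq hq).const_mul (q - 1)).mono'
    ((continuous_cosh_rpow _).mul (continuous_deriv_phi q)).aestronglyMeasurable
    (ae_of_all _ fun s => ?_)
  rw [Pi.mul_apply, norm_mul, norm_of_nonneg (phi_nonneg q s), norm_eq_abs]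
  nlinarith [abs_deriv_phi_le hq.le s, phi_nonneg q s]

lemma integrable_V1_mul_phi_sq (hq : 1 < q) : Integrable fun s => V1 q s * phi q s ^ 2 :=
  (integrable_phi_sq hq).bdd_mul (continuous_V1 q).aestronglyMeasurable
    (ae_of_all _ fun s => (norm_eq_abs _).trans_le (abs_V1_le hq.le s))

end phi

/-- The integrals `∫ |φ'|²`, `∫ V₁ φ²`, `∫ φ²` are finite and the Rayleigh quotient of
`-d²/ds² - V₁` at `φ` equals `-(q-1)²`:
`∫ |φ'|² - ∫ V₁ φ² = -(q-1)² ∫ φ²`. -/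
theorem phi_rayleigh_quotient (q : ℝ) (hq : 1 < q) :
    Integrable (fun s : ℝ => (deriv (phi q) s) ^ 2) ∧
    Integrable (fun s : ℝ => V1 q s * (phi q s) ^ 2) ∧
    Integrable (fun s : ℝ => (phi q s) ^ 2) ∧
    (∫ s : ℝ, (deriv (phi q) s) ^ 2) - (∫ s : ℝ, V1 q s * (phi q s) ^ 2) =
      -((q - 1) ^ 2) * ∫ s : ℝ, (phi q s) ^ 2 := by
  have hφ := integrable_phi_sq hq
  have hV := integrable_V1_mul_phi_sq hq
  have hφ' := integrable_deriv_phi_sq hq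
  have hrhs : (fun s => phi q s * ((q - 1) ^ 2 * phi q s - V1 q s * phi q s))
      = fun s => (q - 1) ^ 2 * phi q s ^ 2 - V1 q s * phi q s ^ 2 := by
    funext s; ring
  have hibp : ∫ s, phi q s * ((q - 1) ^ 2 * phi q s - V1 q s * phi q s)
      = -∫ s, deriv (phi q) s * deriv (phi q) s :=
    integral_mul_deriv_eq_deriv_mul_of_integrable
      (fun s _ => (hasDerivAt_phi q s).differentiableAt.hasDerivAt)
      (fun s _ => hasDerivAt_deriv_phi q s)
      (by rw [Pi.mul_def, hrhs]; exact (hφ.const_mul _).sub hV)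
      (hφ'.congr (ae_of_all _ fun s => sq _)) (integrable_phi_mul_deriv_phi hq)
  simp only [hrhs, ← pow_two, integral_sub (hφ.const_mul _) hV, integral_const_mul] at hibp
  exact ⟨hφ', hV, hφ, by linarith⟩
end

section
/- Let q > 1, V₁(s) := q(q−1)/cosh²(s) and φ(s) := (cosh s)^{1−q}. If u : ℝ → ℝ is twice differentiable with u, u' ∈ L²(ℝ) and satisfies −u''(s) − V₁(s) u(s) = −(q−1)² u(s) for all s ∈ ℝ, then u is a scalar multiple of φ; that is, φ generates the eigenspace of −d²/ds² − V₁ associated with the eigenvalue −(q−1)². -/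
open MeasureTheory Real

theorem Real.hasDerivAt_tanh (x : ℝ) : HasDerivAt tanh (1 / cosh x ^ 2) x := by
  have h : HasDerivAt (fun x => sinh x / cosh x) _ x :=
    (hasDerivAt_sinh x).div (hasDerivAt_cosh x) (cosh_pos x).ne'
  rw [show tanh = fun x => sinh x / cosh x from funext tanh_eq_sinh_div_cosh]
  exact h.congr_deriv (by rw [← sq, ← sq, cosh_sq_sub_sinh_sq])

theorem wronskian_eq_of_hasDerivAt {u u' v v' k : ℝ → ℝ}
    (hu : ∀ s, HasDerivAt u (u' s) s) (hu' : ∀ s, HasDerivAt u' (k s * u s) s)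
    (hv : ∀ s, HasDerivAt v (v' s) s) (hv' : ∀ s, HasDerivAt v' (k s * v s) s) (s t : ℝ) :
    u' s * v s - u s * v' s = u' t * v t - u t * v' t := by
  have hW : ∀ s, HasDerivAt (fun s => u' s * v s - u s * v' s) 0 s := fun s =>
    (((hu' s).mul (hv s)).sub ((hu s).mul (hv' s))).congr_deriv (by ring)
  exact is_const_of_deriv_eq_zero (fun s => (hW s).differentiableAt) (fun s => (hW s).deriv) s t

theorem exists_eq_const_mul_of_wronskian_eq_zero {u u' v v' : ℝ → ℝ}
    (hu : ∀ s, HasDerivAt u (u' s) s) (hv : ∀ s, HasDerivAt v (v' s) s) (hv0 : ∀ s, v s ≠ 0)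
    (hW : ∀ s, u' s * v s - u s * v' s = 0) : ∃ c, ∀ s, u s = c * v s := by
  have hquot : ∀ s, HasDerivAt (fun s => u s / v s) 0 s := fun s =>
    ((hu s).div (hv s) (hv0 s)).congr_deriv (by rw [hW s, zero_div])
  refine ⟨u 0 / v 0, fun s => ?_⟩
  rw [← is_const_of_deriv_eq_zero (fun s => (hquot s).differentiableAt)
    (fun s => (hquot s).deriv) s 0, div_mul_cancel₀ _ (hv0 s)]

theorem eq_zero_of_memLp_const {α E : Type*} [MeasurableSpace α] [NormedAddCommGroup E]
    {μ : Measure α} (hμ : μ Set.univ = ⊤) {p : ENNReal} (hp0 : p ≠ 0) (hp : p ≠ ⊤)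
    {c : E} (h : MemLp (fun _ : α => c) p μ) : c = 0 := by
  simpa [memLp_const_iff hp0 hp, hμ] using h

theorem MeasureTheory.MemLp.mul_of_bound {α : Type*} [MeasurableSpace α] {μ : Measure α}
    {p : ENNReal} {f a : α → ℝ} (hf : MemLp f p μ) (ha : AEStronglyMeasurable a μ) (C : ℝ)
    (haC : ∀ x, |a x| ≤ C) : MemLp (fun x => f x * a x) p μ := by
  simpa only [mul_comm] using hf.mul' (memLp_top_of_bound ha C (ae_of_all _ haC))

theorem phi_pos (q s : ℝ) : 0 < phi q s := rpow_pos_of_pos (cosh_pos s) _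

theorem abs_phi_le_one {q : ℝ} (hq : 1 ≤ q) (s : ℝ) : |phi q s| ≤ 1 := by
  rw [abs_of_pos (phi_pos q s)]
  exact rpow_le_one_of_one_le_of_nonpos (one_le_cosh s) (by linarith)

noncomputable def phiDeriv (q : ℝ) : ℝ → ℝ := fun s => (1 - q) * tanh s * phi q s

theorem hasDerivAt_phi_s8 (q s : ℝ) : HasDerivAt (phi q) (phiDeriv q s) s := by
  refine ((hasDerivAt_cosh s).rpow_const (p := 1 - q) (Or.inl (cosh_pos s).ne')).congr_deriv ?_
  simp only [phiDeriv, phi, tanh_eq_sinh_div_cosh, rpow_sub_one (cosh_pos s).ne']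
  ring

theorem hasDerivAt_phiDeriv (q s : ℝ) :
    HasDerivAt (phiDeriv q) (((q - 1) ^ 2 - V1 q s) * phi q s) s := by
  refine (((hasDerivAt_tanh s).const_mul (1 - q)).mul (hasDerivAt_phi_s8 q s)).congr_deriv ?_
  simp only [phiDeriv, V1, tanh_eq_sinh_div_cosh]
  have hc := (cosh_pos s).ne'
  field_simp
  linear_combination -(q - 1) ^ 2 * phi q s * cosh_sq s

theorem abs_phiDeriv_le {q : ℝ} (hq : 1 ≤ q) (s : ℝ) : |phiDeriv q s| ≤ q - 1 := by
  rw [phiDeriv, abs_mul, abs_mul, abs_of_nonpos (by linarith : 1 - q ≤ 0)]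
  have := mul_le_one₀ (abs_tanh_lt_one s).le (abs_nonneg _) (abs_phi_le_one hq s)
  nlinarith

/-- The eigenspace of `-d²/ds² - V₁` for the eigenvalue `-(q-1)²` is generated by `φ`:
any twice differentiable `L²` solution of `-u'' - V₁ u = -(q-1)² u` with `u' ∈ L²`
is a scalar multiple of `φ`. -/
theorem eigenspace_generated_by_phi (q : ℝ) (hq : 1 < q)
    (u : ℝ → ℝ) (hu : Differentiable ℝ u) (hu' : Differentiable ℝ (deriv u))
    (hu2 : MemLp u 2 volume) (hu'2 : MemLp (deriv u) 2 volume)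
    (hode : ∀ s : ℝ, -(deriv (deriv u) s) - V1 q s * u s = -((q - 1) ^ 2) * u s) :
    ∃ c : ℝ, ∀ s : ℝ, u s = c * phi q s := by
  have hu_deriv (s : ℝ) : HasDerivAt u (deriv u s) s := (hu s).hasDerivAt
  have hu'_deriv (s : ℝ) : HasDerivAt (deriv u) (((q - 1) ^ 2 - V1 q s) * u s) s :=
    (hu' s).hasDerivAt.congr_deriv (by linarith [hode s])
  set W : ℝ → ℝ := fun s => deriv u s * phi q s - u s * phiDeriv q s
  have hW_const : W = fun _ => W 0 := funext fun s =>
    wronskian_eq_of_hasDerivAt hu_deriv hu'_deriv (hasDerivAt_phi_s8 q) (hasDerivAt_phiDeriv q) s 0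
  have hW_memLp : MemLp W 2 volume := by
    have hphi : Continuous (phi q) :=
      continuous_iff_continuousAt.2 fun s => (hasDerivAt_phi_s8 q s).continuousAt
    have hphiDeriv : Continuous (phiDeriv q) :=
      continuous_iff_continuousAt.2 fun s => (hasDerivAt_phiDeriv q s).continuousAt
    exact (hu'2.mul_of_bound hphi.aestronglyMeasurable 1 (abs_phi_le_one hq.le)).sub
      (hu2.mul_of_bound hphiDeriv.aestronglyMeasurable _ (abs_phiDeriv_le hq.le))
  have hW_zero : W 0 = 0 := 
    eq_zero_of_memLp_const volume_univ two_ne_zero ENNReal.ofNat_ne_top (hW_const ▸ hW_memLp)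
  exact exists_eq_const_mul_of_wronskian_eq_zero hu_deriv (hasDerivAt_phi_s8 q)
    (fun s => (phi_pos q s).ne') fun s => (congrFun hW_const s).trans hW_zero
end

section
/- Let p > 2 and define w(s) := (cosh s)^{−2/(p−2)}. Then w is twice differentiable on ℝ and satisfies the ordinary differential equation −(p−2)²·w''(s) + 4·w(s) − 2p·w(s)^{p−1} = 0 for every s ∈ ℝ. -/
/-!
For `w = cosh ^ a` one has `w'' = a² w - a (a - 1) cosh ^ (a - 2)`, using `sinh² = cosh² - 1`.
With `(p - 2) a = -2` the power `w ^ (p - 1)` is `cosh ^ (a - 2)`, and the coefficients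
`(p - 2)² a² = 4`, `(p - 2)² a (a - 1) = 2p` turn the equation into an identity.
-/

open Real

noncomputable def wOpt (p : ℝ) : ℝ → ℝ := fun s => Real.cosh s ^ (-(2 / (p - 2)))

namespace Real

theorem hasDerivAt_cosh_rpow (a s : ℝ) :
    HasDerivAt (fun x => cosh x ^ a) (a * sinh s * cosh s ^ (a - 1)) s := by
  convert (hasDerivAt_cosh s).rpow_const (p := a) (Or.inl (cosh_pos s).ne') using 1
  ring

theorem deriv_cosh_rpow (a : ℝ) :
    deriv (fun x => cosh x ^ a) = fun s => a * sinh s * cosh s ^ (a - 1) :=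
  funext fun s => (hasDerivAt_cosh_rpow a s).deriv

theorem cosh_mul_cosh_rpow_sub_one (a s : ℝ) : cosh s * cosh s ^ (a - 1) = cosh s ^ a := by
  rw [mul_comm, ← rpow_add_one (cosh_pos s).ne', sub_add_cancel]

theorem hasDerivAt_deriv_cosh_rpow (a s : ℝ) :
    HasDerivAt (deriv fun x => cosh x ^ a)
      (a ^ 2 * cosh s ^ a - a * (a - 1) * cosh s ^ (a - 2)) s := by
  rw [deriv_cosh_rpow]
  have h := ((hasDerivAt_sinh s).const_mul a).mul (hasDerivAt_cosh_rpow (a - 1) s)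
  have h₁ := cosh_mul_cosh_rpow_sub_one a s
  have h₂ := cosh_mul_cosh_rpow_sub_one (a - 1) s
  rw [sub_sub, one_add_one_eq_two] at h h₂
  refine h.congr_deriv ?_
  linear_combination a ^ 2 * h₁ + a * (a - 1) * cosh s * h₂ +
    a * (a - 1) * cosh s ^ (a - 2) * Real.sinh_sq s

end Real

/-- `w(s) = (cosh s)^{-2/(p-2)}` is twice differentiable and solves the Euler–Lagrange
equation `-(p-2)² w'' + 4 w - 2p w^{p-1} = 0`. -/
theorem w_euler_lagrange (p : ℝ) (hp : 2 < p) :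
    (Differentiable ℝ (wOpt p) ∧ Differentiable ℝ (deriv (wOpt p))) ∧
    ∀ s : ℝ, -((p - 2) ^ 2) * deriv (deriv (wOpt p)) s + 4 * wOpt p s -
      2 * p * wOpt p s ^ (p - 1) = 0 := by
  obtain ⟨a, hw, hpa⟩ : ∃ a, wOpt p = (fun x => cosh x ^ a) ∧ (p - 2) * a = -2 :=
    ⟨_, rfl, by field_simp [(sub_pos.2 hp).ne']⟩
  rw [hw]
  refine ⟨⟨fun s => (hasDerivAt_cosh_rpow a s).differentiableAt,
    fun s => (hasDerivAt_deriv_cosh_rpow a s).differentiableAt⟩, fun s => ?_⟩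
  have hpow : (cosh s ^ a) ^ (p - 1) = cosh s ^ (a - 2) := by
    rw [← rpow_mul (cosh_pos s).le]
    congr 1
    linear_combination hpa
  rw [(hasDerivAt_deriv_cosh_rpow a s).deriv, hpow]
  linear_combination ((2 - (p - 2) * a) * cosh s ^ a + ((p - 2) * a - p) * cosh s ^ (a - 2)) * hpa
end
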